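/- arXiv:1703.04938 — 3 statements merged into one kernel-verified Lean document; each statement's English description precedes it below -/
import Mathlib

section
/- Let δ = k − u for integers 0 ≤ u ≤ k, and let j be an integer with 0 ≤ j ≤ k. Then ∑_{t=0}^{δ} (-1)^t · C(δ,t) · (C(k−u−t, j) + C(k−u−t, k−j)) equals 0 if j ≠ k−u and j ≠ u; equals 1 if exactly one of j = k−u, j = u holds; and equals 2 if j = k−u = u. -/
open Finset

-- After reflecting `t ↦ n - t` this is the `n`-th forward difference of `x ↦ C(x, m)` at `0`.
theorem Int.alternating_sum_range_choose_mul_choose_sub (n m : ℕ) :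
    ∑ t ∈ Finset.range (n + 1), (-1 : ℤ) ^ t * n.choose t * ((n - t).choose m : ℤ) =
      if n = m then 1 else 0 := by
  rw [← fwdDiff_iter_choose_zero, fwdDiff_iter_eq_sum_shift, ← sum_range_reflect]
  refine sum_congr rfl fun t ht => ?_
  have ht : t ≤ n := Nat.lt_succ_iff.mp (mem_range.mp ht)
  simp [Nat.choose_symm ht, Nat.sub_sub_self ht, mul_assoc]

/-- ∑_{t=0}^{δ} (-1)^t C(δ,t) (C(k−u−t,j) + C(k−u−t,k−j)), with δ = k−u,
equals 0, 1, or 2 according to whether none, exactly one, or both of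
j = k−u, j = u hold. -/
theorem stmt_2 (k u j : ℕ) (hu : u ≤ k) (hj : j ≤ k) :
    ((j ≠ k - u ∧ j ≠ u) →
      ∑ t ∈ Finset.range (k - u + 1),
        (-1 : ℤ) ^ t * ((k - u).choose t) *
          (((k - u - t).choose j : ℤ) + ((k - u - t).choose (k - j) : ℤ)) = 0) ∧
    (((j = k - u ∧ j ≠ u) ∨ (j ≠ k - u ∧ j = u)) →
      ∑ t ∈ Finset.range (k - u + 1),
        (-1 : ℤ) ^ t * ((k - u).choose t) *
          (((k - u - t).choose j : ℤ) + ((k - u - t).choose (k - j) : ℤ)) = 1) ∧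
    ((j = k - u ∧ j = u) →
      ∑ t ∈ Finset.range (k - u + 1),
        (-1 : ℤ) ^ t * ((k - u).choose t) *
          (((k - u - t).choose j : ℤ) + ((k - u - t).choose (k - j) : ℤ)) = 2) := by
  simp only [mul_add, sum_add_distrib, Int.alternating_sum_range_choose_mul_choose_sub]
  refine ⟨?_, ?_, ?_⟩ <;> intro h <;> split_ifs <;> omega
end

section
/- Define sequences A_n, P_n, B_n, U_n (for fixed integer q ≥ 5) by the system: A_{n+1} = 2A_n + 4P_n + 2B_n + 2U_n − 2; P_{n+1} = A_n + 2P_n + B_n + U_n − 1; B_{n+1} = (q−4)A_n + (q−3)B_n − 2(q−4); U_{n+1} = (q−5)A_n + (q−4)B_n − 2(q−4). Then the sequence t_n = A_n + B_n satisfies the linear recurrence t_n = (q+2)t_{n−1} − (q+7)t_{n−2} + 8t_{n−3} − 2t_{n−4} for all n ≥ 5. -/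
/-- The squares-sum system for HPT_{4,q}: if A,P,B,U satisfy the stated system,
then t_n = A_n + B_n satisfies
t_n = (q+2)t_{n−1} − (q+7)t_{n−2} + 8t_{n−3} − 2t_{n−4} for n ≥ 5. -/
theorem stmt_9 (q : ℤ) (hq : 5 ≤ q) (A P B U : ℕ → ℤ)
    (hA : ∀ n, A (n + 1) = 2 * A n + 4 * P n + 2 * B n + 2 * U n - 2)
    (hP : ∀ n, P (n + 1) = A n + 2 * P n + B n + U n - 1)
    (hB : ∀ n, B (n + 1) = (q - 4) * A n + (q - 3) * B n - 2 * (q - 4))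
    (hU : ∀ n, U (n + 1) = (q - 5) * A n + (q - 4) * B n - 2 * (q - 4)) :
    ∀ n, 5 ≤ n →
      A n + B n = (q + 2) * (A (n - 1) + B (n - 1)) - (q + 7) * (A (n - 2) + B (n - 2))
        + 8 * (A (n - 3) + B (n - 3)) - 2 * (A (n - 4) + B (n - 4)) := by
  intro n hn
  obtain ⟨j, rfl⟩ : ∃ j, n = j + 5 := ⟨n - 5, by omega⟩
  have e1A := hA j
  have e1P := hP j
  have e1B := hB j
  have e1U := hU j
  have e2A := hA (j + 1)
  rw [show j + 1 + 1 = j + 2 from by ring] at e2A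
  have e2P := hP (j + 1)
  rw [show j + 1 + 1 = j + 2 from by ring] at e2P
  have e2B := hB (j + 1)
  rw [show j + 1 + 1 = j + 2 from by ring] at e2B
  have e2U := hU (j + 1)
  rw [show j + 1 + 1 = j + 2 from by ring] at e2U
  have e3A := hA (j + 2)
  rw [show j + 2 + 1 = j + 3 from by ring] at e3A
  have e3P := hP (j + 2)
  rw [show j + 2 + 1 = j + 3 from by ring] at e3P
  have e3B := hB (j + 2)
  rw [show j + 2 + 1 = j + 3 from by ring] at e3B
  have e3U := hU (j + 2)
  rw [show j + 2 + 1 = j + 3 from by ring] at e3U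
  have e4A := hA (j + 3)
  rw [show j + 3 + 1 = j + 4 from by ring] at e4A
  have e4P := hP (j + 3)
  rw [show j + 3 + 1 = j + 4 from by ring] at e4P
  have e4B := hB (j + 3)
  rw [show j + 3 + 1 = j + 4 from by ring] at e4B
  have e4U := hU (j + 3)
  rw [show j + 3 + 1 = j + 4 from by ring] at e4U
  have e5A := hA (j + 4)
  rw [show j + 4 + 1 = j + 5 from by ring] at e5A
  have e5P := hP (j + 4)
  rw [show j + 4 + 1 = j + 5 from by ring] at e5P
  have e5B := hB (j + 4)
  rw [show j + 4 + 1 = j + 5 from by ring] at e5B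
  have e5U := hU (j + 4)
  rw [show j + 4 + 1 = j + 5 from by ring] at e5U
  rw [show j + 5 - 1 = j + 4 from by omega, show j + 5 - 2 = j + 3 from by omega,
    show j + 5 - 3 = j + 2 from by omega, show j + 5 - 4 = j + 1 from by omega,
    e5A, e5B, e4A, e4P, e4B, e4U, e3A, e3P, e3B, e3U, e2A, e2P, e2B, e2U, e1A, e1P, e1B, e1U]
  ring
end

section
/- The Franel numbers S_3(n) = ∑_{i=0}^{n} C(n,i)³ satisfy the recurrence (n+1)²·S_3(n+1) = (7n² + 7n + 2)·S_3(n) + 8n²·S_3(n−1) for all n ≥ 1. -/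
/-- Certificate function for Franel's recurrence (times n), with n = m+1. -/
def franelG (m : ℕ) : ℕ → ℚ
  | 0 => 0
  | j+1 => (4*(j:ℚ)^3 - 22*((m:ℚ)+1) + 39*((m:ℚ)+1)*((j:ℚ)+1) - 18*((m:ℚ)+1)*((j:ℚ)+1)^2
      - 32*((m:ℚ)+1)^2 + 27*((m:ℚ)+1)^2*((j:ℚ)+1) - 14*((m:ℚ)+1)^3)
      * (((m+1).choose j : ℚ))^3

lemma franel_point (m k : ℕ) (hk : k ≤ m + 2) :
    franelG m (k+1) - franelG m k
      = ((m:ℚ)+1) * (((m:ℚ)+2)^2 * (((m+2).choose k : ℚ))^3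
          - (7*((m:ℚ)+1)^2 + 7*((m:ℚ)+1) + 2) * (((m+1).choose k : ℚ))^3
          - 8*((m:ℚ)+1)^2 * ((m.choose k : ℚ))^3) := by
  match k with
  | 0 =>
    simp [franelG]
    ring
  | j+1 =>
    rcases Nat.lt_or_ge j (m+1) with hj | hj
    · -- main case : j ≤ m
      have hjm : j ≤ m := by omega
      set N : ℚ := (m:ℚ)+1 with hN
      set J : ℚ := (j:ℚ) with hJ
      have hJN : J + 1 ≤ N := by
        rw [hN, hJ]; exact_mod_cast by exact_mod_cast Nat.succ_le_succ hjm
      -- choose identities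
      have h2 : (((m+1).choose (j+1) : ℚ)) * (N+1) = (((m+2).choose (j+1) : ℚ)) * (N - J) := by
        have h := Nat.choose_mul_succ_eq (m+1) (j+1)
        have e : m + 1 + 1 - (j + 1) = m + 1 - j := by omega
        rw [e] at h
        have h' := congrArg (fun x : ℕ => (x : ℚ)) h
        push_cast [Nat.cast_sub (show j ≤ m+1 by omega)] at h'
        rw [hN, hJ]; linear_combination h'
      have h3 : ((m.choose (j+1) : ℚ)) * N = (((m+1).choose (j+1) : ℚ)) * (N - J - 1) := by
        have h := Nat.choose_mul_succ_eq m (j+1)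
        have e : m + 1 - (j + 1) = m - j := by omega
        rw [e] at h
        have h' := congrArg (fun x : ℕ => (x : ℚ)) h
        push_cast [Nat.cast_sub hjm] at h'
        rw [hN, hJ]; linear_combination h'
      have h1 : (((m+1).choose (j+1) : ℚ)) * (J+1) = (((m+1).choose j : ℚ)) * (N - J) := by
        have h := Nat.choose_succ_right_eq (m+1) j
        have h' := congrArg (fun x : ℕ => (x : ℚ)) h
        push_cast [Nat.cast_sub (show j ≤ m+1 by omega)] at h'
        rw [hN, hJ]; linear_combination h'
      have h2c : ((((m+1).choose (j+1) : ℚ)) * (N+1))^3 = ((((m+2).choose (j+1) : ℚ)) * (N - J))^3 := by rw [h2]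
      have h3c : (((m.choose (j+1) : ℚ)) * N)^3 = ((((m+1).choose (j+1) : ℚ)) * (N - J - 1))^3 := by rw [h3]
      have h1c : ((((m+1).choose (j+1) : ℚ)) * (J+1))^3 = ((((m+1).choose j : ℚ)) * (N - J))^3 := by rw [h1]
      have hNJne : (N - J) ≠ 0 := by
        have : (1:ℚ) ≤ N - J := by linarith
        linarith
      have hNne : N ≠ 0 := by rw [hN]; positivity
      have hMne : ((N - J)^3 * N^2) ≠ 0 := mul_ne_zero (pow_ne_zero _ hNJne) (pow_ne_zero _ hNne)
      apply mul_left_cancel₀ hMne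
      show ((N - J)^3 * N^2) * (franelG m (j+2) - franelG m (j+1)) = _
      simp only [franelG]
      push_cast
      rw [← hN, ← hJ]
      linear_combination (N^3*(N+1)^2) * h2c + (8*N^2*(N-J)^3) * h3c
        + ((4*J^3 - 22*N + 39*N*(J+1) - 18*N*(J+1)^2 - 32*N^2 + 27*N^2*(J+1) - 14*N^3) * N^2) * h1c
    · -- boundary case k = m+2
      have hj' : j = m + 1 := by omega
      subst hj'
      have c1 : (m+1).choose (m+2) = 0 := Nat.choose_eq_zero_of_lt (by omega)
      have c2 : m.choose (m+2) = 0 := Nat.choose_eq_zero_of_lt (by omega)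
      simp only [franelG, c1, c2, Nat.choose_self]
      push_cast
      ring

/-- Franel's recurrence: with S_3(n) = ∑_{i=0}^n C(n,i)³,
(n+1)² S_3(n+1) = (7n²+7n+2) S_3(n) + 8n² S_3(n−1) for n ≥ 1. -/
theorem stmt_14 (n : ℕ) (hn : 1 ≤ n) :
    (n + 1) ^ 2 * (∑ i ∈ Finset.range (n + 2), ((n + 1).choose i) ^ 3) =
      (7 * n ^ 2 + 7 * n + 2) * (∑ i ∈ Finset.range (n + 1), (n.choose i) ^ 3) +
        8 * n ^ 2 * (∑ i ∈ Finset.range n, ((n - 1).choose i) ^ 3) := by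
  obtain ⟨m, rfl⟩ := Nat.exists_eq_add_of_le' hn
  simp only [Nat.add_sub_cancel]
  set N : ℚ := (m:ℚ)+1 with hN
  set S1 : ℚ := ∑ i ∈ Finset.range (m+3), (((m+2).choose i : ℚ))^3 with hS1
  set S2 : ℚ := ∑ i ∈ Finset.range (m+3), (((m+1).choose i : ℚ))^3 with hS2
  set S3 : ℚ := ∑ i ∈ Finset.range (m+3), ((m.choose i : ℚ))^3 with hS3
  have tel : ∑ k ∈ Finset.range (m+3), (franelG m (k+1) - franelG m k)
      = franelG m (m+3) - franelG m 0 := Finset.sum_range_sub (franelG m) (m+3)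
  have gtop : franelG m (m+3) = 0 := by
    have c : (m+1).choose (m+2) = 0 := Nat.choose_eq_zero_of_lt (by omega)
    simp [franelG, c]
  have g0 : franelG m 0 = 0 := rfl
  have main : N * (((N+1))^2 * S1 - (7*N^2+7*N+2) * S2 - 8*N^2 * S3) = 0 := by
    calc N * (((N+1))^2 * S1 - (7*N^2+7*N+2) * S2 - 8*N^2 * S3)
        = ∑ k ∈ Finset.range (m+3), (franelG m (k+1) - franelG m k) := by
          rw [Finset.sum_congr rfl (fun k hk => franel_point m k
            (by exact Nat.lt_succ_iff.mp (Finset.mem_range.mp hk)))]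
          rw [← Finset.mul_sum]
          congr 1
          rw [hS1, hS2, hS3, hN]
          rw [Finset.sum_sub_distrib, Finset.sum_sub_distrib,
            ← Finset.mul_sum, ← Finset.mul_sum, ← Finset.mul_sum]
          ring
      _ = 0 := by rw [tel, gtop, g0, sub_zero]
  have hNne : N ≠ 0 := by rw [hN]; positivity
  have main2 : ((N+1))^2 * S1 = (7*N^2+7*N+2) * S2 + 8*N^2 * S3 := by
    have h := (mul_eq_zero.mp main).resolve_left hNne
    linarith
  -- shrink S2 and S3 to the required ranges
  have e2 : S2 = ∑ i ∈ Finset.range (m+2), (((m+1).choose i : ℚ))^3 := by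
    rw [hS2, Finset.sum_range_succ, Nat.choose_eq_zero_of_lt (by omega)]
    norm_num
  have e3 : S3 = ∑ i ∈ Finset.range (m+1), ((m.choose i : ℚ))^3 := by
    rw [hS3, Finset.sum_range_succ, Finset.sum_range_succ,
      Nat.choose_eq_zero_of_lt (show m < m+1 by omega),
      Nat.choose_eq_zero_of_lt (show m < m+2 by omega)]
    norm_num
  rw [e2, e3] at main2
  have goalQ : ((m:ℚ)+1+1)^2 * (∑ i ∈ Finset.range (m+3), (((m+2).choose i : ℚ))^3)
      = (7*((m:ℚ)+1)^2+7*((m:ℚ)+1)+2) * (∑ i ∈ Finset.range (m+2), (((m+1).choose i : ℚ))^3)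
        + 8*((m:ℚ)+1)^2 * (∑ i ∈ Finset.range (m+1), ((m.choose i : ℚ))^3) := by
    rw [hS1] at main2
    linear_combination main2
  have := goalQ
  push_cast at this
  exact_mod_cast this
end
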